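/- arXiv:1406.1093 — 4 statements merged into one kernel-verified Lean document; each statement's English description precedes it below -/
import Mathlib

section
/- Let u : ℝ^m → ℝ be a nonnegative locally Lipschitz weak solution of (1/a)div(a∇u) + b u + V u^σ ≤ 0 on ℝ^m, and let z : ℝ^m → ℝ be locally Lipschitz with z > 0 everywhere, which is a weak solution of (1/a)div(a∇z) + b z ≥ 0 on ℝ^m. Then w := u/z is nonnegative and locally Lipschitz, and for every nonnegative Lipschitz function ψ : ℝ^m → ℝ with compact support one has ∫ a V z^{σ+1} w^σ ψ dx ≤ ∫ a z² ⟨∇w, ∇ψ⟩ dx; that is, w is a weak solution of (1/(a z²)) div(a z² ∇w) + V z^{σ−1} w^σ ≤ 0 on ℝ^m. -/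
open MeasureTheory Real RealInnerProductSpace Classical ENNReal

/-!
Test the inequality for `u` with `z ψ` and the inequality for `z` with `u ψ`, and subtract. The
`b`-terms are the same integral `∫ a b u z ψ` and cancel. On the gradient side, the pointwise
identity `z² ∇(u/z) = z ∇u - u ∇z` turns the difference into `∫ a z² ⟨∇w, ∇ψ⟩`, the mixed terms
`ψ ⟨∇u, ∇z⟩` cancelling. Since `u` and `z` are locally Lipschitz, `z ψ` and `u ψ` are admissible
test functions, and all gradient integrals are finite because Lipschitz gradients are bounded
on compact sets.
-/

open Metric Set Filter Topology

namespace LocallyLipschitz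

variable {α : Type*} [PseudoMetricSpace α]

theorem comp_contDiffAt {E F : Type*} [NormedAddCommGroup E] [NormedSpace ℝ E]
    [NormedAddCommGroup F] [NormedSpace ℝ F] {g : α → E} {φ : E → F}
    (hg : LocallyLipschitz g) (hφ : ∀ x, ContDiffAt ℝ 1 φ (g x)) :
    LocallyLipschitz fun x => φ (g x) := by
  intro x
  obtain ⟨Kg, t, ht, hgt⟩ := hg x
  obtain ⟨Kφ, s, hs, hφs⟩ := (hφ x).exists_lipschitzOnWith
  exact ⟨Kφ * Kg, t ∩ g ⁻¹' s, inter_mem ht (hg.continuous.continuousAt hs),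
    hφs.comp (hgt.mono inter_subset_left) ((mapsTo_preimage g s).mono_left inter_subset_right)⟩

theorem real_mul {f g : α → ℝ} (hf : LocallyLipschitz f) (hg : LocallyLipschitz g) :
    LocallyLipschitz fun x => f x * g x :=
  (hf.prodMk hg).comp_contDiffAt (φ := fun p : ℝ × ℝ => p.1 * p.2) fun _ =>
    contDiffAt_fst.mul contDiffAt_snd

theorem real_div {f g : α → ℝ} (hf : LocallyLipschitz f) (hg : LocallyLipschitz g)
    (hg0 : ∀ x, g x ≠ 0) : LocallyLipschitz fun x => f x / g x :=
  (hf.prodMk hg).comp_contDiffAt (φ := fun p : ℝ × ℝ => p.1 / p.2) fun x =>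
    contDiffAt_fst.div contDiffAt_snd (hg0 x)

theorem exists_lipschitzWith_of_hasCompactSupport [ProperSpace α] {β : Type*}
    [SeminormedAddCommGroup β] {f : α → β} (hf : LocallyLipschitz f)
    (hsupp : HasCompactSupport f) : ∃ L, LipschitzWith L f := by
  set K := cthickening 1 (tsupport f)
  obtain ⟨L, hL⟩ := (hf.locallyLipschitzOn (s := K)).exists_lipschitzOnWith_of_compact
    hsupp.cthickening
  obtain ⟨M, hM⟩ := hsupp.exists_bound_of_continuous hf.continuous
  have near : ∀ p q, p ∈ tsupport f → dist p q ≤ 1 → p ∈ K ∧ q ∈ K := fun p q hp hpq =>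
    ⟨self_subset_cthickening _ hp, mem_cthickening_of_dist_le q p 1 _ hp (dist_comm p q ▸ hpq)⟩
  refine ⟨max L (2 * M).toNNReal, LipschitzWith.of_dist_le_mul fun p q => ?_⟩
  rcases le_or_gt (dist p q) 1 with hpq | hpq
  · by_cases hsupp_pq : p ∈ tsupport f ∨ q ∈ tsupport f
    · obtain ⟨hp, hq⟩ : p ∈ K ∧ q ∈ K := by
        rcases hsupp_pq with hp | hq
        · exact near p q hp hpq
        · exact (near q p hq (dist_comm p q ▸ hpq)).symm
      exact (hL.dist_le_mul p hp q hq).trans (by gcongr; exact le_max_left _ _)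
    · rw [not_or] at hsupp_pq
      rw [image_eq_zero_of_notMem_tsupport hsupp_pq.1,
        image_eq_zero_of_notMem_tsupport hsupp_pq.2, dist_self]
      positivity
  · calc dist (f p) (f q) ≤ ‖f p‖ + ‖f q‖ := dist_le_norm_add_norm _ _
      _ ≤ (2 * M).toNNReal := by
        rw [Real.coe_toNNReal']; linarith [hM p, hM q, le_max_left (2 * M) 0]
      _ ≤ (2 * M).toNNReal * dist p q := le_mul_of_one_le_right (by positivity) hpq.le
      _ ≤ _ := by gcongr; exact le_max_right _ _

end LocallyLipschitz

theorem rpow_add_one_mul_div_rpow {u z : ℝ} (hu : 0 ≤ u) (hz : 0 < z) (σ : ℝ) :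
    z ^ (σ + 1) * (u / z) ^ σ = u ^ σ * z := by
  have hzσ : z ^ σ ≠ 0 := (rpow_pos_of_pos hz σ).ne'
  rw [div_rpow hu hz.le, rpow_add_one hz.ne']
  field_simp

section Gradient

variable {E : Type*} [NormedAddCommGroup E] [InnerProductSpace ℝ E] [CompleteSpace E]
  {f g : E → ℝ} {Gf Gg G : E} {x : E}

theorem HasGradientAt.norm_le_of_lipschitzOn (hf : HasGradientAt f G x) {s : Set E}
    (hs : s ∈ 𝓝 x) {L : NNReal} (hL : LipschitzOnWith L f s) : ‖G‖ ≤ L := by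
  simpa using hf.hasFDerivAt.le_of_lipschitzOn hs hL

theorem HasGradientAt.eq_zero_of_notMem_tsupport (hf : HasGradientAt f G x)
    (hx : x ∉ tsupport f) : G = 0 :=
  hf.unique ((hasGradientAt_const x 0).congr_of_eventuallyEq
    (notMem_tsupport_iff_eventuallyEq.1 hx))

theorem HasGradientAt.mul (hf : HasGradientAt f Gf x) (hg : HasGradientAt g Gg x) :
    HasGradientAt (fun y => f y * g y) (f x • Gg + g x • Gf) x := by
  rw [hasGradientAt_iff_hasFDerivAt, map_add, map_smul, map_smul]
  exact hf.hasFDerivAt.mul hg.hasFDerivAt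

theorem HasGradientAt.div (hf : HasGradientAt f Gf x) (hg : HasGradientAt g Gg x)
    (hx : g x ≠ 0) :
    HasGradientAt (fun y => f y / g y) ((g x ^ 2)⁻¹ • (g x • Gf - f x • Gg)) x := by
  have hinv : HasGradientAt (fun y => (g y)⁻¹) (-(g x ^ 2)⁻¹ • Gg) x := by
    rw [hasGradientAt_iff_hasFDerivAt, map_smul]
    exact (hasDerivAt_inv hx).comp_hasFDerivAt x hg.hasFDerivAt
  have h := hf.mul hinv
  simp only [← div_eq_mul_inv] at h
  convert h using 1
  match_scalars <;> field_simp

/-- Shaped as the difference of the weak inequalities for `f` and `g` tested with `g ψ` and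
`f ψ` (`t = ψ x`, `v = ∇ψ x`); the mixed terms `t ⟪Gf, Gg⟫` cancel. -/
theorem HasGradientAt.sq_mul_inner_div (hf : HasGradientAt f Gf x) (hg : HasGradientAt g Gg x)
    (hw : HasGradientAt (fun y => f y / g y) G x) (hx : g x ≠ 0) (t : ℝ) (v : E) :
    g x ^ 2 * ⟪G, v⟫ = ⟪Gf, g x • v + t • Gg⟫ - ⟪Gg, f x • v + t • Gf⟫ := by
  rw [hw.unique (hf.div hg hx), real_inner_smul_left, ← mul_assoc,
    mul_inv_cancel₀ (pow_ne_zero 2 hx), one_mul]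
  simp only [inner_sub_left, inner_add_right, real_inner_smul_left, real_inner_smul_right,
    real_inner_comm Gf Gg]
  ring

theorem LocallyLipschitz.exists_norm_gradient_le [ProperSpace E] (hf : LocallyLipschitz f)
    {K : Set E} (hK : IsCompact K) :
    ∃ C : ℝ, ∀ x ∈ K, ∀ G, HasGradientAt f G x → ‖G‖ ≤ C := by
  obtain ⟨L, hL⟩ := (hf.locallyLipschitzOn (s := cthickening 1 K)).exists_lipschitzOnWith_of_compact
    hK.cthickening
  refine ⟨L, fun x hx G hG => hG.norm_le_of_lipschitzOn ?_ hL⟩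
  exact mem_of_superset (isOpen_thickening.mem_nhds (self_subset_thickening one_pos K hx))
    (thickening_subset_cthickening 1 K)

theorem aemeasurable_of_ae_hasGradientAt [MeasurableSpace E] [BorelSpace E] {μ : Measure E}
    {gf : E → E} (h : ∀ᵐ x ∂μ, HasGradientAt f (gf x) x) : AEMeasurable gf μ := by
  refine ⟨fun x => (InnerProductSpace.toDual ℝ E).symm (fderiv ℝ f x),
    (InnerProductSpace.toDual ℝ E).symm.continuous.measurable.comp (measurable_fderiv ℝ f), ?_⟩
  filter_upwards [h] with x hx
  rw [hx.hasFDerivAt.fderiv, LinearIsometryEquiv.symm_apply_apply]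

end Gradient

section TestFunction

variable {E : Type*} [NormedAddCommGroup E] [InnerProductSpace ℝ E] [CompleteSpace E]
  [MeasurableSpace E]

structure IsTestFunction (μ : Measure E) (ψ : E → ℝ) (gψ : E → E) : Prop where
  lipschitzWith : ∃ L, LipschitzWith L ψ
  nonneg : ∀ x, 0 ≤ ψ x
  hasCompactSupport : HasCompactSupport ψ
  hasGradientAt : ∀ᵐ x ∂μ, HasGradientAt ψ (gψ x) x

variable [ProperSpace E] {μ : Measure E} {ψ f : E → ℝ} {gψ gf : E → E}

theorem IsTestFunction.mul (hψ : IsTestFunction μ ψ gψ) (hf : LocallyLipschitz f)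
    (hf0 : ∀ x, 0 ≤ f x) (hgf : ∀ᵐ x ∂μ, HasGradientAt f (gf x) x) :
    IsTestFunction μ (fun x => f x * ψ x) (fun x => f x • gψ x + ψ x • gf x) where
  lipschitzWith := by
    obtain ⟨L, hL⟩ := hψ.lipschitzWith
    exact (hf.real_mul hL.locallyLipschitz).exists_lipschitzWith_of_hasCompactSupport
      hψ.hasCompactSupport.mul_left
  nonneg x := mul_nonneg (hf0 x) (hψ.nonneg x)
  hasCompactSupport := hψ.hasCompactSupport.mul_left
  hasGradientAt := by
    filter_upwards [hgf, hψ.hasGradientAt] with x hfx hψx using hfx.mul hψx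

theorem IsTestFunction.integrable_mul_inner [BorelSpace E] [IsFiniteMeasureOnCompacts μ]
    (hψ : IsTestFunction μ ψ gψ) {c : E → ℝ} (hc : Continuous c) (hf : LocallyLipschitz f)
    (hgf : ∀ᵐ x ∂μ, HasGradientAt f (gf x) x) :
    Integrable (fun x => c x * ⟪gf x, gψ x⟫) μ := by
  set K := tsupport ψ
  have hK : IsCompact K := hψ.hasCompactSupport
  obtain ⟨L, hL⟩ := hψ.lipschitzWith
  obtain ⟨Cc, hCc⟩ := hK.exists_bound_of_continuousOn hc.continuousOn
  obtain ⟨Cf, hCf⟩ := hf.exists_norm_gradient_le hK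
  have hbound : Integrable (K.indicator fun _ => Cc * (Cf * L)) μ :=
    (integrable_indicator_iff hK.measurableSet).2 (integrableOn_const hK.measure_lt_top.ne)
  refine hbound.mono' (hc.aemeasurable.mul ((aemeasurable_of_ae_hasGradientAt hgf).inner
    (aemeasurable_of_ae_hasGradientAt hψ.hasGradientAt))).aestronglyMeasurable ?_
  filter_upwards [hgf, hψ.hasGradientAt] with x hfx hψx
  by_cases hx : x ∈ K
  · have hc_le := hCc x hx
    have hgf_le := hCf x hx _ hfx
    have hgψ_le := hψx.norm_le_of_lipschitzOn univ_mem (lipschitzOnWith_univ.2 hL)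
    rw [indicator_of_mem hx, norm_mul]
    calc ‖c x‖ * ‖⟪gf x, gψ x⟫‖ ≤ ‖c x‖ * (‖gf x‖ * ‖gψ x‖) := by
          gcongr; exact norm_inner_le_norm _ _
      _ ≤ Cc * (Cf * L) := by
          gcongr
          · exact (norm_nonneg _).trans hc_le
          · exact (norm_nonneg _).trans hgf_le
  · rw [indicator_of_notMem hx, hψx.eq_zero_of_notMem_tsupport hx, inner_zero_right, mul_zero,
      norm_zero]

end TestFunction

theorem quotient_is_weak_solution_general
    (m : ℕ)
    (a : EuclideanSpace ℝ (Fin m) → ℝ) (ha_lip : LocallyLipschitz a)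
    (V : EuclideanSpace ℝ (Fin m) → ℝ)
    (b : EuclideanSpace ℝ (Fin m) → ℝ)
    (σ : ℝ)
    (u : EuclideanSpace ℝ (Fin m) → ℝ) (hu_lip : LocallyLipschitz u) (hu_nonneg : ∀ x, 0 ≤ u x)
    (gu : EuclideanSpace ℝ (Fin m) → EuclideanSpace ℝ (Fin m))
    (hgu : ∀ᵐ x ∂(volume : Measure (EuclideanSpace ℝ (Fin m))), HasGradientAt u (gu x) x)
    (hu_weak : ∀ (ψ : EuclideanSpace ℝ (Fin m) → ℝ) (gψ : EuclideanSpace ℝ (Fin m) → EuclideanSpace ℝ (Fin m)),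
      (∃ L, LipschitzWith L ψ) → (∀ x, 0 ≤ ψ x) → HasCompactSupport ψ →
      (∀ᵐ x ∂(volume : Measure (EuclideanSpace ℝ (Fin m))), HasGradientAt ψ (gψ x) x) →
      (∫ x, a x * b x * u x * ψ x) + ∫ x, a x * V x * u x ^ σ * ψ x ≤
        ∫ x, a x * ⟪gu x, gψ x⟫)
    (z : EuclideanSpace ℝ (Fin m) → ℝ) (hz_lip : LocallyLipschitz z) (hz_pos : ∀ x, 0 < z x)
    (gz : EuclideanSpace ℝ (Fin m) → EuclideanSpace ℝ (Fin m))
    (hgz : ∀ᵐ x ∂(volume : Measure (EuclideanSpace ℝ (Fin m))), HasGradientAt z (gz x) x)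
    (hz_weak : ∀ (ψ : EuclideanSpace ℝ (Fin m) → ℝ) (gψ : EuclideanSpace ℝ (Fin m) → EuclideanSpace ℝ (Fin m)),
      (∃ L, LipschitzWith L ψ) → (∀ x, 0 ≤ ψ x) → HasCompactSupport ψ →
      (∀ᵐ x ∂(volume : Measure (EuclideanSpace ℝ (Fin m))), HasGradientAt ψ (gψ x) x) →
      ∫ x, a x * ⟪gz x, gψ x⟫ ≤ ∫ x, a x * b x * z x * ψ x) :
    (∀ x, 0 ≤ u x / z x) ∧ LocallyLipschitz (fun x => u x / z x) ∧
    ∀ (gw : EuclideanSpace ℝ (Fin m) → EuclideanSpace ℝ (Fin m)),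
      (∀ᵐ x ∂(volume : Measure (EuclideanSpace ℝ (Fin m))), HasGradientAt (fun y => u y / z y) (gw x) x) →
      ∀ (ψ : EuclideanSpace ℝ (Fin m) → ℝ) (gψ : EuclideanSpace ℝ (Fin m) → EuclideanSpace ℝ (Fin m)),
        (∃ L, LipschitzWith L ψ) → (∀ x, 0 ≤ ψ x) → HasCompactSupport ψ →
        (∀ᵐ x ∂(volume : Measure (EuclideanSpace ℝ (Fin m))), HasGradientAt ψ (gψ x) x) →
        ∫ x, a x * V x * z x ^ (σ + 1) * (u x / z x) ^ σ * ψ x ≤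
          ∫ x, a x * z x ^ (2:ℕ) * ⟪gw x, gψ x⟫ := by
  refine ⟨fun x => div_nonneg (hu_nonneg x) (hz_pos x).le,
    hu_lip.real_div hz_lip fun x => (hz_pos x).ne', ?_⟩
  intro gw hgw ψ gψ hψ_lip hψ_nonneg hψ_supp hgψ
  have hψ : IsTestFunction volume ψ gψ := ⟨hψ_lip, hψ_nonneg, hψ_supp, hgψ⟩
  have hzψ := hψ.mul hz_lip (fun x => (hz_pos x).le) hgz
  have huψ := hψ.mul hu_lip hu_nonneg hgu
  have hu_test :=
    hu_weak _ _ hzψ.lipschitzWith hzψ.nonneg hzψ.hasCompactSupport hzψ.hasGradientAt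
  have hz_test :=
    hz_weak _ _ huψ.lipschitzWith huψ.nonneg huψ.hasCompactSupport huψ.hasGradientAt
  have hb_terms : ∫ x, a x * b x * u x * (z x * ψ x) = ∫ x, a x * b x * z x * (u x * ψ x) :=
    integral_congr_ae (ae_of_all _ fun x => by ring)
  have hV_terms : ∫ x, a x * V x * z x ^ (σ + 1) * (u x / z x) ^ σ * ψ x =
      ∫ x, a x * V x * u x ^ σ * (z x * ψ x) :=
    integral_congr_ae (ae_of_all _ fun x => by
      linear_combination a x * V x * ψ x * rpow_add_one_mul_div_rpow (hu_nonneg x) (hz_pos x) σ)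
  have hgradient_terms : ∫ x, a x * z x ^ (2:ℕ) * ⟪gw x, gψ x⟫ =
      (∫ x, a x * ⟪gu x, z x • gψ x + ψ x • gz x⟫) -
        ∫ x, a x * ⟪gz x, u x • gψ x + ψ x • gu x⟫ := by
    rw [← integral_sub (hzψ.integrable_mul_inner ha_lip.continuous hu_lip hgu)
      (huψ.integrable_mul_inner ha_lip.continuous hz_lip hgz)]
    refine integral_congr_ae ?_
    filter_upwards [hgu, hgz, hgw] with x hux hzx hwx
    rw [mul_assoc, hux.sq_mul_inner_div hzx hwx (hz_pos x).ne', mul_sub]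
  rw [hV_terms, hgradient_terms]
  linarith

/-- Lemma 4.1: if `u ≥ 0` solves `(1/a)div(a∇u) + b u + V u^σ ≤ 0` weakly and `z > 0`
solves `(1/a)div(a∇z) + b z ≥ 0` weakly, then `w = u/z` is a nonnegative weak solution of
`(1/(a z²)) div(a z² ∇w) + V z^(σ-1) w^σ ≤ 0`. -/
theorem quotient_is_weak_solution
    (m : ℕ) (hm : 1 ≤ m)
    (a : EuclideanSpace ℝ (Fin m) → ℝ) (ha_lip : LocallyLipschitz a) (ha_pos : ∀ x, 0 < a x)
    (V : EuclideanSpace ℝ (Fin m) → ℝ) (hV_meas : Measurable V)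
    (hV_loc : LocallyIntegrable V (volume : Measure (EuclideanSpace ℝ (Fin m))))
    (hV_pos : ∀ᵐ x ∂(volume : Measure (EuclideanSpace ℝ (Fin m))), 0 < V x)
    (b : EuclideanSpace ℝ (Fin m) → ℝ) (hb_meas : Measurable b)
    (hb_loc : LocallyIntegrable b (volume : Measure (EuclideanSpace ℝ (Fin m))))
    (σ : ℝ) (hσ : 1 < σ)
    (u : EuclideanSpace ℝ (Fin m) → ℝ) (hu_lip : LocallyLipschitz u) (hu_nonneg : ∀ x, 0 ≤ u x)
    (gu : EuclideanSpace ℝ (Fin m) → EuclideanSpace ℝ (Fin m))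
    (hgu : ∀ᵐ x ∂(volume : Measure (EuclideanSpace ℝ (Fin m))), HasGradientAt u (gu x) x)
    (hu_weak : ∀ (ψ : EuclideanSpace ℝ (Fin m) → ℝ) (gψ : EuclideanSpace ℝ (Fin m) → EuclideanSpace ℝ (Fin m)),
      (∃ L, LipschitzWith L ψ) → (∀ x, 0 ≤ ψ x) → HasCompactSupport ψ →
      (∀ᵐ x ∂(volume : Measure (EuclideanSpace ℝ (Fin m))), HasGradientAt ψ (gψ x) x) →
      (∫ x, a x * b x * u x * ψ x) + ∫ x, a x * V x * u x ^ σ * ψ x ≤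
        ∫ x, a x * ⟪gu x, gψ x⟫)
    (z : EuclideanSpace ℝ (Fin m) → ℝ) (hz_lip : LocallyLipschitz z) (hz_pos : ∀ x, 0 < z x)
    (gz : EuclideanSpace ℝ (Fin m) → EuclideanSpace ℝ (Fin m))
    (hgz : ∀ᵐ x ∂(volume : Measure (EuclideanSpace ℝ (Fin m))), HasGradientAt z (gz x) x)
    (hz_weak : ∀ (ψ : EuclideanSpace ℝ (Fin m) → ℝ) (gψ : EuclideanSpace ℝ (Fin m) → EuclideanSpace ℝ (Fin m)),
      (∃ L, LipschitzWith L ψ) → (∀ x, 0 ≤ ψ x) → HasCompactSupport ψ →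
      (∀ᵐ x ∂(volume : Measure (EuclideanSpace ℝ (Fin m))), HasGradientAt ψ (gψ x) x) →
      ∫ x, a x * ⟪gz x, gψ x⟫ ≤ ∫ x, a x * b x * z x * ψ x) :
    (∀ x, 0 ≤ u x / z x) ∧ LocallyLipschitz (fun x => u x / z x) ∧
    ∀ (gw : EuclideanSpace ℝ (Fin m) → EuclideanSpace ℝ (Fin m)),
      (∀ᵐ x ∂(volume : Measure (EuclideanSpace ℝ (Fin m))), HasGradientAt (fun y => u y / z y) (gw x) x) →
      ∀ (ψ : EuclideanSpace ℝ (Fin m) → ℝ) (gψ : EuclideanSpace ℝ (Fin m) → EuclideanSpace ℝ (Fin m)),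
        (∃ L, LipschitzWith L ψ) → (∀ x, 0 ≤ ψ x) → HasCompactSupport ψ →
        (∀ᵐ x ∂(volume : Measure (EuclideanSpace ℝ (Fin m))), HasGradientAt ψ (gψ x) x) →
        ∫ x, a x * V x * z x ^ (σ + 1) * (u x / z x) ^ σ * ψ x ≤
          ∫ x, a x * z x ^ (2:ℕ) * ⟪gw x, gψ x⟫ :=
  quotient_is_weak_solution_general m a ha_lip V b σ u hu_lip hu_nonneg gu hgu hu_weak z hz_lip
    hz_pos gz hgz hz_weak
end

section
/- Suppose there exist constants C > 0, C₀ ≥ 0, k ≥ 0, θ > 0, τ ≥ 1 and R₀ > e such that V(x) ≤ C |x|^{C₀} e^{−θ (log|x|)^{τ}} for almost every x with |x| ≥ e, and ∫_{B_R \ B_{R/2}} V^{−β} dμ ≤ C R^{α} (log R)^{k} for every R ≥ R₀. Then for every θ' ∈ (0, θ) there exist constants C' > 0, C₀' ≥ 0, R₁ > e and ε₀ > 0 such that for every R ≥ R₁ and every ε ∈ (0, ε₀] one has ∫_{B_R \ B_{R/2}} V^{−β+ε} dμ ≤ C' R^{α + C₀' ε} (log R)^{k} e^{−ε θ' (log R)^{τ}}.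 -/
open MeasureTheory Real RealInnerProductSpace Classical ENNReal

/-- The measure `dμ = a dx` on `ℝ^m`. -/
noncomputable def muA (m : ℕ) (a : EuclideanSpace ℝ (Fin m) → ℝ) : Measure (EuclideanSpace ℝ (Fin m)) :=
  (volume : Measure (EuclideanSpace ℝ (Fin m))).withDensity (fun x => ENNReal.ofReal (a x))

/-- Sufficient condition for (HP3): a superpolynomially decaying upper bound on `V`
together with a critical volume growth condition with logarithmic exponent `k`. -/
theorem sufficient_condition_HP3
    (m : ℕ) (hm : 1 ≤ m)
    (a : EuclideanSpace ℝ (Fin m) → ℝ) (ha_lip : LocallyLipschitz a) (ha_pos : ∀ x, 0 < a x)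
    (V : EuclideanSpace ℝ (Fin m) → ℝ) (hV_meas : Measurable V)
    (hV_loc : LocallyIntegrable V (volume : Measure (EuclideanSpace ℝ (Fin m))))
    (hV_pos : ∀ᵐ x ∂(volume : Measure (EuclideanSpace ℝ (Fin m))), 0 < V x)
    (p σ : ℝ) (hp : 1 < p) (hσ : p - 1 < σ)
    (C C₀ k θ τ R₀ : ℝ) (hC : 0 < C) (hC₀ : 0 ≤ C₀) (hk : 0 ≤ k) (hθ : 0 < θ)
    (hτ : 1 ≤ τ) (hR₀ : Real.exp 1 < R₀)
    (hVb : ∀ᵐ x ∂(volume : Measure (EuclideanSpace ℝ (Fin m))), Real.exp 1 ≤ ‖x‖ →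
      V x ≤ C * ‖x‖ ^ C₀ * Real.exp (-θ * Real.log ‖x‖ ^ τ))
    (hvol : ∀ R, R₀ ≤ R →
      ∫⁻ x in Metric.ball (0 : EuclideanSpace ℝ (Fin m)) R \ Metric.ball 0 (R / 2),
          ENNReal.ofReal (V x ^ (-((p - 1) / (σ - p + 1)))) ∂(muA m a) ≤
        ENNReal.ofReal (C * R ^ (p * σ / (σ - p + 1)) * Real.log R ^ k)) :
    ∀ θ' : ℝ, 0 < θ' → θ' < θ →
      ∃ C' : ℝ, 0 < C' ∧ ∃ C₀' : ℝ, 0 ≤ C₀' ∧ ∃ R₁ : ℝ, Real.exp 1 < R₁ ∧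
      ∃ ε₀ : ℝ, 0 < ε₀ ∧
      ∀ R, R₁ ≤ R → ∀ ε, 0 < ε → ε ≤ ε₀ →
        ∫⁻ x in Metric.ball (0 : EuclideanSpace ℝ (Fin m)) R \ Metric.ball 0 (R / 2),
            ENNReal.ofReal (V x ^ (-((p - 1) / (σ - p + 1)) + ε)) ∂(muA m a) ≤
          ENNReal.ofReal (C' * R ^ ((p * σ / (σ - p + 1)) + C₀' * ε) * Real.log R ^ k *
            Real.exp (-ε * θ' * Real.log R ^ τ)) := by

  intro θ' hθ'0 hθ'θ
  have hτ0 : (0:ℝ) < τ := lt_of_lt_of_le one_pos hτ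
  set c : ℝ := (θ'/θ) ^ (1/τ) with hc_def
  have hc0 : 0 < c := Real.rpow_pos_of_pos (div_pos hθ'0 hθ) _
  have hc1 : c < 1 :=
    Real.rpow_lt_one (div_nonneg hθ'0.le hθ.le) ((div_lt_one hθ).mpr hθ'θ) (by positivity)
  have hcτ : c ^ τ = θ'/θ := by
    rw [hc_def, ← Real.rpow_mul (div_nonneg hθ'0.le hθ.le), one_div_mul_cancel hτ0.ne',
      Real.rpow_one]
  set R₁ : ℝ := max (max R₀ (2 * Real.exp 1)) (Real.exp (Real.log 2 / (1 - c))) with hR₁def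
  refine ⟨C * max C 1, by positivity, C₀, hC₀, R₁, ?_, 1, one_pos, ?_⟩
  · exact lt_of_lt_of_le hR₀ (le_trans (le_max_left _ _) (le_max_left _ _))
  intro R hR ε hε hε1
  have hRR₀ : R₀ ≤ R := le_trans (le_trans (le_max_left _ _) (le_max_left _ _)) hR
  have hR2e : 2 * Real.exp 1 ≤ R := le_trans (le_trans (le_max_right _ _) (le_max_left _ _)) hR
  have hRc : Real.exp (Real.log 2 / (1 - c)) ≤ R := le_trans (le_max_right _ _) hR
  have hRe : Real.exp 1 < R := lt_of_lt_of_le hR₀ hRR₀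
  have hR0 : (0:ℝ) < R := lt_trans (Real.exp_pos 1) hRe
  have hlogR1 : (1:ℝ) ≤ Real.log R := (Real.le_log_iff_exp_le hR0).mpr hRe.le
  have hlogR0 : (0:ℝ) ≤ Real.log R := le_trans zero_le_one hlogR1
  have hlogc : c * Real.log R ≤ Real.log (R/2) := by
    have h1 : Real.log 2 / (1 - c) ≤ Real.log R := (Real.le_log_iff_exp_le hR0).mpr hRc
    have h2 : Real.log 2 ≤ (1 - c) * Real.log R := by
      rw [div_le_iff₀ (by linarith)] at h1; linarith [h1]
    rw [Real.log_div hR0.ne' two_ne_zero]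
    linarith
  set β : ℝ := (p - 1) / (σ - p + 1) with hβ
  set α : ℝ := p * σ / (σ - p + 1) with hα
  set M : ℝ := max C 1 * R ^ (C₀ * ε) * Real.exp (-ε * θ' * Real.log R ^ τ) with hM
  have hM0 : 0 ≤ M := by positivity
  set s : Set (EuclideanSpace ℝ (Fin m)) := Metric.ball 0 R \ Metric.ball 0 (R / 2) with hs_def
  have hs : MeasurableSet s := measurableSet_ball.diff measurableSet_ball
  have hac : muA m a ≪ (volume : Measure (EuclideanSpace ℝ (Fin m))) :=
    withDensity_absolutelyContinuous _ _
  have hQ : ∀ᵐ x ∂(volume : Measure (EuclideanSpace ℝ (Fin m))),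
      0 < V x ∧ (Real.exp 1 ≤ ‖x‖ → V x ≤ C * ‖x‖ ^ C₀ * Real.exp (-θ * Real.log ‖x‖ ^ τ)) :=
    hV_pos.and hVb
  have hQ' : ∀ᵐ x ∂(muA m a),
      0 < V x ∧ (Real.exp 1 ≤ ‖x‖ → V x ≤ C * ‖x‖ ^ C₀ * Real.exp (-θ * Real.log ‖x‖ ^ τ)) :=
    hQ.filter_mono hac.ae_le
  have hae : ∀ᵐ x ∂((muA m a).restrict s),
      ENNReal.ofReal (V x ^ (-β + ε)) ≤
        ENNReal.ofReal M * ENNReal.ofReal (V x ^ (-β)) := by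
    filter_upwards [ae_restrict_of_ae hQ', ae_restrict_mem hs] with x hx hxs
    obtain ⟨hVx, hVbx⟩ := hx
    have hx1 : ‖x‖ < R := mem_ball_zero_iff.mp hxs.1
    have hx2 : R / 2 ≤ ‖x‖ := le_of_not_gt fun h => hxs.2 (mem_ball_zero_iff.mpr h)
    have hxe : Real.exp 1 ≤ ‖x‖ := le_trans (by linarith) hx2
    have hVbx' := hVbx hxe
    have hx0 : (0:ℝ) < ‖x‖ := lt_of_lt_of_le (Real.exp_pos 1) hxe
    -- key log inequality
    have hlogx : c * Real.log R ≤ Real.log ‖x‖ :=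
      le_trans hlogc (Real.log_le_log (by linarith) hx2)
    have hkey : θ' * Real.log R ^ τ ≤ θ * Real.log ‖x‖ ^ τ := by
      have h1 : (c * Real.log R) ^ τ ≤ Real.log ‖x‖ ^ τ :=
        Real.rpow_le_rpow (by positivity) hlogx hτ0.le
      rw [Real.mul_rpow hc0.le hlogR0, hcτ] at h1
      have h2 := mul_le_mul_of_nonneg_left h1 hθ.le
      calc θ' * Real.log R ^ τ = θ * (θ' / θ * Real.log R ^ τ) := by
            field_simp
        _ ≤ θ * Real.log ‖x‖ ^ τ := h2
    -- bound on V x ^ ε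
    have hVε : V x ^ ε ≤ M := by
      have h1 : V x ^ ε ≤ (C * ‖x‖ ^ C₀ * Real.exp (-θ * Real.log ‖x‖ ^ τ)) ^ ε :=
        Real.rpow_le_rpow hVx.le hVbx' hε.le
      have h2 : (C * ‖x‖ ^ C₀ * Real.exp (-θ * Real.log ‖x‖ ^ τ)) ^ ε =
          C ^ ε * (‖x‖ ^ C₀) ^ ε * Real.exp (-θ * Real.log ‖x‖ ^ τ) ^ ε := by
        rw [Real.mul_rpow (by positivity) (Real.exp_nonneg _),
          Real.mul_rpow hC.le (by positivity)]
      have h3 : C ^ ε ≤ max C 1 := by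
        calc C ^ ε ≤ (max C 1) ^ ε := Real.rpow_le_rpow hC.le (le_max_left _ _) hε.le
          _ ≤ (max C 1) ^ (1:ℝ) :=
            Real.rpow_le_rpow_of_exponent_le (le_max_right _ _) hε1
          _ = max C 1 := Real.rpow_one _
      have h4 : (‖x‖ ^ C₀) ^ ε ≤ R ^ (C₀ * ε) := by
        rw [← Real.rpow_mul (norm_nonneg x)]
        exact Real.rpow_le_rpow (norm_nonneg x) hx1.le (by positivity)
      have h5 : Real.exp (-θ * Real.log ‖x‖ ^ τ) ^ ε ≤ Real.exp (-ε * θ' * Real.log R ^ τ) := by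
        rw [← Real.exp_mul]
        apply Real.exp_le_exp.mpr
        nlinarith [mul_le_mul_of_nonneg_left hkey hε.le]
      calc V x ^ ε ≤ C ^ ε * (‖x‖ ^ C₀) ^ ε * Real.exp (-θ * Real.log ‖x‖ ^ τ) ^ ε := by
            rw [← h2]; exact h1
        _ ≤ max C 1 * R ^ (C₀ * ε) * Real.exp (-ε * θ' * Real.log R ^ τ) := by
            apply mul_le_mul _ h5 (by positivity) (by positivity)
            exact mul_le_mul h3 h4 (by positivity) (by positivity)
        _ = M := rfl
    have hsplit : V x ^ (-β + ε) = V x ^ ε * V x ^ (-β) := by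
      rw [← Real.rpow_add hVx]; congr 1; ring
    rw [← ENNReal.ofReal_mul hM0]
    apply ENNReal.ofReal_le_ofReal
    rw [hsplit]
    exact mul_le_mul_of_nonneg_right hVε (Real.rpow_nonneg hVx.le _)
  calc ∫⁻ x in s, ENNReal.ofReal (V x ^ (-β + ε)) ∂(muA m a)
      ≤ ∫⁻ x in s, ENNReal.ofReal M * ENNReal.ofReal (V x ^ (-β)) ∂(muA m a) :=
        lintegral_mono_ae hae
    _ = ENNReal.ofReal M * ∫⁻ x in s, ENNReal.ofReal (V x ^ (-β)) ∂(muA m a) :=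
        lintegral_const_mul' _ _ ENNReal.ofReal_ne_top
    _ ≤ ENNReal.ofReal M * ENNReal.ofReal (C * R ^ α * Real.log R ^ k) :=
        mul_le_mul_right (hvol R hRR₀) _
    _ = ENNReal.ofReal (M * (C * R ^ α * Real.log R ^ k)) := (ENNReal.ofReal_mul hM0).symm
    _ ≤ ENNReal.ofReal (C * max C 1 * R ^ (α + C₀ * ε) * Real.log R ^ k *
          Real.exp (-ε * θ' * Real.log R ^ τ)) := by
        apply ENNReal.ofReal_le_ofReal
        rw [hM, Real.rpow_add hR0]
        ring_nf
        exact le_refl _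
end

section
/- Let σ > 1 and r₀ > 0. Let A : (r₀, ∞) → ℝ be continuously differentiable with A > 0 on (r₀, ∞) and ∫_{r₀}^{∞} dr/A(r) < ∞, and set γ(r) = ∫_{r}^{∞} dξ/A(ξ) for r ≥ r₀. Let B : (r₀, ∞) → ℝ be continuous with ∫_{r₀}^{∞} γ(r)^{σ} |B(r)| dr < ∞. Then there exist R₀ > r₀ and a differentiable function y : (R₀, ∞) → ℝ such that y(r) > 0 for all r > R₀, the function r ↦ A(r) y'(r) is differentiable on (R₀, ∞) with (A y')'(r) + B(r) y(r)^{σ} = 0 for every r > R₀, and y(r)/γ(r) → 1 as r → ∞. -/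
open MeasureTheory Real RealInnerProductSpace Classical ENNReal

/-!
Writing `y = γ u`, the equation together with `A y' → -1` and `y / γ → 1` becomes the
fixed-point problem `u = 1 - emdenOp A B σ (γ u) / γ`. Since `|a^σ - b^σ| ≤ σ 2^(σ-1) |a - b|`
on `[0, 2]` and `∫_ρ^∞ (1/A(s)) ∫_s^∞ γ^σ |B| ≤ γ(ρ) ∫_ρ^∞ γ^σ |B|`, on `(R, ∞)` this map is
Lipschitz in the sup norm with constant `σ 2^(σ-1) ∫_R^∞ γ^σ |B|`, which is small for large `R`;
so it contracts the ball `‖u - 1‖ ≤ 1/2` of bounded continuous functions, and the same bound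
forces `u → 1`.
-/

open Set Filter Topology
open scoped BoundedContinuousFunction

lemma abs_setIntegral_le_mul {α : Type*} [MeasurableSpace α] {μ : Measure α} {s : Set α}
    {f w : α → ℝ} {c : ℝ} (hs : MeasurableSet s) (hw : IntegrableOn w s μ)
    (h : ∀ t ∈ s, |f t| ≤ c * w t) :
    |∫ t in s, f t ∂μ| ≤ c * ∫ t in s, w t ∂μ := by
  rw [← integral_const_mul]
  exact norm_integral_le_of_norm_le (hw.const_mul c)
    (ae_restrict_of_forall_mem hs fun t ht => (Real.norm_eq_abs _).trans_le (h t ht))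

lemma integral_Ioi_pos {f : ℝ → ℝ} {a : ℝ} (hf : IntegrableOn f (Ioi a))
    (hpos : ∀ x ∈ Ioi a, 0 < f x) : 0 < ∫ x in Ioi a, f x := by
  rw [setIntegral_pos_iff_support_of_nonneg_ae
    (ae_restrict_of_forall_mem measurableSet_Ioi fun x hx => (hpos x hx).le) hf]
  have hsupp : Function.support f ∩ Ioi a = Ioi a :=
    inter_eq_right.2 fun x hx => (hpos x hx).ne'
  simp [hsupp]

lemma hasDerivAt_integral_Ioi {G : ℝ → ℝ} {a r : ℝ} (hG : IntegrableOn G (Ioi a)) (hr : a < r)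
    (hc : ContinuousAt G r) : HasDerivAt (fun x => ∫ t in Ioi x, G t) (-G r) r := by
  have hprim : HasDerivAt (fun x => ∫ t in a..x, G t) (G r) r :=
    intervalIntegral.integral_hasDerivAt_right
      ((intervalIntegrable_iff_integrableOn_Ioc_of_le hr.le).2 (hG.mono_set Ioc_subset_Ioi_self))
      ⟨Ioi a, Ioi_mem_nhds hr, hG.aestronglyMeasurable⟩ hc
  refine (hprim.const_sub (∫ t in Ioi a, G t)).congr_of_eventuallyEq ?_
  filter_upwards [Ioi_mem_nhds hr] with x hx
  rw [← intervalIntegral.integral_Ioi_sub_Ioi hG (le_of_lt hx)]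
  ring

lemma abs_rpow_sub_rpow_le {σ a b c : ℝ} (hσ : 1 ≤ σ) (ha : a ∈ Icc 0 c) (hb : b ∈ Icc 0 c) :
    |a ^ σ - b ^ σ| ≤ σ * c ^ (σ - 1) * |a - b| := by
  have hσ0 : 0 ≤ σ := zero_le_one.trans hσ
  have hderiv_le : ∀ x ∈ Icc 0 c, ‖σ * x ^ (σ - 1)‖ ≤ σ * c ^ (σ - 1) := fun x hx => by
    rw [Real.norm_eq_abs, abs_of_nonneg (mul_nonneg hσ0 (rpow_nonneg hx.1 _))]
    exact mul_le_mul_of_nonneg_left (rpow_le_rpow hx.1 hx.2 (by linarith)) hσ0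
  simpa [Real.norm_eq_abs] using Convex.norm_image_sub_le_of_norm_hasDerivWithin_le
    (fun x _ => (hasDerivAt_rpow_const (Or.inr hσ)).hasDerivWithinAt) hderiv_le
    (convex_Icc 0 c) hb ha

lemma abs_mul_rpow_sub_mul_rpow_le {σ c g β a b : ℝ} (hσ : 1 ≤ σ) (hg : 0 ≤ g)
    (ha : a ∈ Icc 0 c) (hb : b ∈ Icc 0 c) :
    |β * (g * a) ^ σ - β * (g * b) ^ σ| ≤ σ * c ^ (σ - 1) * |a - b| * (g ^ σ * |β|) := by
  have hscaled : ∀ x ∈ Icc 0 c, g * x ∈ Icc 0 (g * c) := fun x hx =>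
    ⟨mul_nonneg hg hx.1, mul_le_mul_of_nonneg_left hx.2 hg⟩
  have hpow : |(g * a) ^ σ - (g * b) ^ σ| ≤ σ * c ^ (σ - 1) * |a - b| * g ^ σ := by
    calc |(g * a) ^ σ - (g * b) ^ σ|
        ≤ σ * (g * c) ^ (σ - 1) * |g * a - g * b| :=
          abs_rpow_sub_rpow_le hσ (hscaled a ha) (hscaled b hb)
      _ = σ * c ^ (σ - 1) * |a - b| * (g ^ (σ - 1) * g) := by
          rw [mul_rpow hg (ha.1.trans ha.2), ← mul_sub, abs_mul, abs_of_nonneg hg]; ring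
      _ = σ * c ^ (σ - 1) * |a - b| * g ^ σ := by
          rw [← rpow_add_one' hg (by linarith), sub_add_cancel]
  rw [← mul_sub, abs_mul, mul_comm |β|, ← mul_assoc]
  exact mul_le_mul_of_nonneg_right hpow (abs_nonneg β)

noncomputable def emdenFlux (B : ℝ → ℝ) (σ : ℝ) (y : ℝ → ℝ) (s : ℝ) : ℝ :=
  ∫ t in Ioi s, B t * y t ^ σ

/-- Integrating `(A y')' = -B y^σ` twice from infinity, with `A y' → -1` and `y → 0`, turns
the equation into `y = γ - emdenOp A B σ y`. -/
noncomputable def emdenOp (A B : ℝ → ℝ) (σ : ℝ) (y : ℝ → ℝ) (r : ℝ) : ℝ :=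
  ∫ s in Ioi r, emdenFlux B σ y s / A s

/-- Fixed points `u` give `y = γ u` with `y = γ - emdenOp A B σ y` on `(R, ∞)`; freezing the
argument at `max r R` keeps `u` defined and bounded on all of `ℝ`. -/
noncomputable def emdenMap (A B γ : ℝ → ℝ) (σ R : ℝ) (u : ℝ → ℝ) (r : ℝ) : ℝ :=
  1 - emdenOp A B σ (fun t => γ t * u t) (max r R) / γ (max r R)

section EmdenOperator

variable {A B y : ℝ → ℝ} {σ a : ℝ}

lemma continuousOn_emdenFlux (hP : IntegrableOn (fun t => B t * y t ^ σ) (Ioi a)) :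
    ContinuousOn (emdenFlux B σ y) (Ici a) :=
  hP.continuousOn_Ici_primitive_Ioi

lemma integrableOn_emdenFlux_div (hP : IntegrableOn (fun t => B t * y t ^ σ) (Ioi a))
    (hA : IntegrableOn (fun s => 1 / A s) (Ioi a)) :
    IntegrableOn (fun s => emdenFlux B σ y s / A s) (Ioi a) := by
  simp_rw [div_eq_mul_one_div (emdenFlux B σ y _)]
  refine hA.bdd_mul (c := ∫ t in Ioi a, ‖B t * y t ^ σ‖)
    (((continuousOn_emdenFlux hP).mono Ioi_subset_Ici_self).aestronglyMeasurable
      measurableSet_Ioi)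
    (ae_restrict_of_forall_mem measurableSet_Ioi fun s hs => ?_)
  exact (norm_integral_le_integral_norm _).trans (setIntegral_mono_set hP.norm
    (ae_of_all _ fun _ => norm_nonneg _) (Ioi_subset_Ioi (le_of_lt hs)).eventuallyLE)

lemma abs_emdenOp_sub_le {y₁ y₂ w : ℝ → ℝ} {c ρ : ℝ}
    (hA_int : IntegrableOn (fun s => 1 / A s) (Ioi a)) (hA : ∀ s ∈ Ioi a, 0 < A s)
    (hP₁ : IntegrableOn (fun t => B t * y₁ t ^ σ) (Ioi a))
    (hP₂ : IntegrableOn (fun t => B t * y₂ t ^ σ) (Ioi a))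
    (hw : IntegrableOn w (Ioi a)) (hw0 : ∀ t ∈ Ioi a, 0 ≤ w t) (hc : 0 ≤ c)
    (hP : ∀ t ∈ Ioi a, |B t * y₁ t ^ σ - B t * y₂ t ^ σ| ≤ c * w t) (hρ : a ≤ ρ) :
    |emdenOp A B σ y₁ ρ - emdenOp A B σ y₂ ρ| ≤
      c * (∫ t in Ioi ρ, w t) * ∫ s in Ioi ρ, 1 / A s := by
  have hsub : Ioi ρ ⊆ Ioi a := Ioi_subset_Ioi hρ
  have hflux : ∀ s ∈ Ioi ρ,
      |emdenFlux B σ y₁ s - emdenFlux B σ y₂ s| ≤ c * ∫ t in Ioi ρ, w t := fun s hs => by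
    have hsa : Ioi s ⊆ Ioi a := Ioi_subset_Ioi (hρ.trans (le_of_lt hs))
    calc |emdenFlux B σ y₁ s - emdenFlux B σ y₂ s|
        = |∫ t in Ioi s, (B t * y₁ t ^ σ - B t * y₂ t ^ σ)| := by
          rw [emdenFlux, emdenFlux, integral_sub (hP₁.mono_set hsa) (hP₂.mono_set hsa)]
      _ ≤ c * ∫ t in Ioi s, w t :=
          abs_setIntegral_le_mul measurableSet_Ioi (hw.mono_set hsa)
            fun t ht => hP t (hsa ht)
      _ ≤ c * ∫ t in Ioi ρ, w t :=
          mul_le_mul_of_nonneg_left (setIntegral_mono_set (hw.mono_set hsub)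
            (ae_restrict_of_forall_mem measurableSet_Ioi fun t ht => hw0 t (hsub ht))
            (Ioi_subset_Ioi (le_of_lt hs)).eventuallyLE) hc
  calc |emdenOp A B σ y₁ ρ - emdenOp A B σ y₂ ρ|
      = |∫ s in Ioi ρ, (emdenFlux B σ y₁ s / A s - emdenFlux B σ y₂ s / A s)| := by
        rw [emdenOp, emdenOp, integral_sub
          ((integrableOn_emdenFlux_div hP₁ hA_int).mono_set hsub)
          ((integrableOn_emdenFlux_div hP₂ hA_int).mono_set hsub)]
    _ ≤ c * (∫ t in Ioi ρ, w t) * ∫ s in Ioi ρ, 1 / A s :=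
        abs_setIntegral_le_mul measurableSet_Ioi (hA_int.mono_set hsub) fun s hs => by
          have hAs := hA s (hsub hs)
          rw [← sub_div, abs_div, abs_of_pos hAs, div_eq_mul_one_div]
          exact mul_le_mul_of_nonneg_right (hflux s hs) (one_div_pos.2 hAs).le

lemma hasDerivAt_of_eq_sub_emdenOp {γ : ℝ → ℝ} {r : ℝ} (hr : a < r) (hA : ContinuousAt A r)
    (hAr : A r ≠ 0) (hγ : HasDerivAt γ (-(1 / A r)) r)
    (hP : IntegrableOn (fun t => B t * y t ^ σ) (Ioi a))
    (hA_int : IntegrableOn (fun s => 1 / A s) (Ioi a))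
    (hy : y =ᶠ[𝓝 r] fun s => γ s - emdenOp A B σ y s) :
    HasDerivAt y ((emdenFlux B σ y r - 1) / A r) r := by
  have hflux : ContinuousAt (emdenFlux B σ y) r :=
    (continuousOn_emdenFlux hP).continuousAt (Ici_mem_nhds hr)
  have hop : HasDerivAt (emdenOp A B σ y) (-(emdenFlux B σ y r / A r)) r :=
    hasDerivAt_integral_Ioi (integrableOn_emdenFlux_div hP hA_int) hr (hflux.div hA hAr)
  refine ((hγ.sub hop).congr_of_eventuallyEq hy).congr_deriv ?_
  field_simp
  ring

lemma hasDerivAt_mul_emdenFlux_sub_one_div {r : ℝ} (hr : a < r) (hA : ∀ᶠ s in 𝓝 r, A s ≠ 0)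
    (hP : IntegrableOn (fun t => B t * y t ^ σ) (Ioi a))
    (hPr : ContinuousAt (fun t => B t * y t ^ σ) r) :
    HasDerivAt (fun s => A s * ((emdenFlux B σ y s - 1) / A s)) (-(B r * y r ^ σ)) r := by
  refine ((hasDerivAt_integral_Ioi hP hr hPr).sub_const 1).congr_of_eventuallyEq ?_
  filter_upwards [hA] with s hs
  exact mul_div_cancel₀ _ hs

end EmdenOperator

structure EmdenSetting (σ r₀ : ℝ) (A γ B : ℝ → ℝ) : Prop where
  one_le_sigma : 1 ≤ σ
  A_pos : ∀ r ∈ Ioi r₀, 0 < A r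
  integrableOn_inv_A : IntegrableOn (fun r => 1 / A r) (Ioi r₀)
  gamma_eq : ∀ r, r₀ ≤ r → γ r = ∫ ξ in Ioi r, 1 / A ξ
  continuousOn_B : ContinuousOn B (Ioi r₀)
  integrableOn_weight : IntegrableOn (fun r => γ r ^ σ * |B r|) (Ioi r₀)

namespace EmdenSetting

variable {σ r₀ : ℝ} {A γ B : ℝ → ℝ}

lemma gamma_pos (h : EmdenSetting σ r₀ A γ B) {r : ℝ} (hr : r₀ ≤ r) : 0 < γ r := by
  rw [h.gamma_eq r hr]
  exact integral_Ioi_pos (h.integrableOn_inv_A.mono_set (Ioi_subset_Ioi hr))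
    fun x hx => one_div_pos.2 (h.A_pos x (hr.trans_lt hx))

lemma continuousOn_gamma (h : EmdenSetting σ r₀ A γ B) : ContinuousOn γ (Ici r₀) :=
  h.integrableOn_inv_A.continuousOn_Ici_primitive_Ioi.congr fun r hr => h.gamma_eq r hr

lemma hasDerivAt_gamma (h : EmdenSetting σ r₀ A γ B) {r : ℝ} (hr : r₀ < r)
    (hA : ContinuousAt A r) : HasDerivAt γ (-(1 / A r)) r := by
  refine (hasDerivAt_integral_Ioi h.integrableOn_inv_A hr
    (continuousAt_const.div hA (h.A_pos r hr).ne')).congr_of_eventuallyEq ?_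
  filter_upwards [Ioi_mem_nhds hr] with s hs
  exact h.gamma_eq s (le_of_lt hs)

lemma sigma_mul_two_rpow_nonneg (h : EmdenSetting σ r₀ A γ B) : 0 ≤ σ * (2 : ℝ) ^ (σ - 1) :=
  mul_nonneg (zero_le_one.trans h.one_le_sigma) (rpow_nonneg zero_le_two _)

lemma abs_source_sub_le (h : EmdenSetting σ r₀ A γ B) {u v : ℝ → ℝ} {d t : ℝ}
    (hu : ∀ x, u x ∈ Icc 0 2) (hv : ∀ x, v x ∈ Icc 0 2) (hd : ∀ x, |u x - v x| ≤ d)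
    (ht : t ∈ Ioi r₀) :
    |B t * (γ t * u t) ^ σ - B t * (γ t * v t) ^ σ| ≤
      σ * 2 ^ (σ - 1) * d * (γ t ^ σ * |B t|) := by
  exact (abs_mul_rpow_sub_mul_rpow_le h.one_le_sigma (h.gamma_pos (le_of_lt ht)).le
    (hu t) (hv t)).trans (mul_le_mul_of_nonneg_right
      (mul_le_mul_of_nonneg_left (hd t) h.sigma_mul_two_rpow_nonneg) (mul_nonneg (rpow_nonneg
        (h.gamma_pos (le_of_lt ht)).le _) (abs_nonneg _)))

lemma continuousOn_source (h : EmdenSetting σ r₀ A γ B) {u : ℝ → ℝ} (hu : Continuous u) :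
    ContinuousOn (fun t => B t * (γ t * u t) ^ σ) (Ioi r₀) :=
  h.continuousOn_B.mul (((h.continuousOn_gamma.mono Ioi_subset_Ici_self).mul
    hu.continuousOn).rpow_const fun _ _ => Or.inr (zero_le_one.trans h.one_le_sigma))

lemma integrableOn_source (h : EmdenSetting σ r₀ A γ B) {u : ℝ → ℝ} (hu : Continuous u)
    (hu2 : ∀ x, u x ∈ Icc 0 2) :
    IntegrableOn (fun t => B t * (γ t * u t) ^ σ) (Ioi r₀) := by
  refine Integrable.mono' (h.integrableOn_weight.const_mul (σ * 2 ^ (σ - 1) * 2))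
    ((h.continuousOn_source hu).aestronglyMeasurable measurableSet_Ioi)
    (ae_restrict_of_forall_mem measurableSet_Ioi fun t ht => ?_)
  have hσ0 : σ ≠ 0 := (zero_lt_one.trans_le h.one_le_sigma).ne'
  simpa [zero_rpow hσ0, abs_of_nonneg (hu2 t).1] using
    h.abs_source_sub_le (v := 0) hu2 (fun _ => ⟨le_rfl, zero_le_two⟩)
      (fun x => by simpa [abs_of_nonneg (hu2 x).1] using (hu2 x).2) ht

lemma abs_emdenOp_mul_sub_le (h : EmdenSetting σ r₀ A γ B) {u v : ℝ → ℝ} {d ρ : ℝ}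
    (hu_cont : Continuous u) (hv_cont : Continuous v) (hu : ∀ x, u x ∈ Icc 0 2)
    (hv : ∀ x, v x ∈ Icc 0 2) (hd : ∀ x, |u x - v x| ≤ d) (hρ : r₀ ≤ ρ) :
    |emdenOp A B σ (fun t => γ t * u t) ρ - emdenOp A B σ (fun t => γ t * v t) ρ| ≤
      σ * 2 ^ (σ - 1) * d * (∫ t in Ioi ρ, γ t ^ σ * |B t|) * γ ρ := by
  have hd0 : 0 ≤ d := (abs_nonneg _).trans (hd 0)
  rw [h.gamma_eq ρ hρ]
  exact abs_emdenOp_sub_le h.integrableOn_inv_A h.A_pos (h.integrableOn_source hu_cont hu)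
    (h.integrableOn_source hv_cont hv) h.integrableOn_weight
    (fun t ht => mul_nonneg (rpow_nonneg (h.gamma_pos (le_of_lt ht)).le _) (abs_nonneg _))
    (mul_nonneg h.sigma_mul_two_rpow_nonneg hd0)
    (fun t ht => h.abs_source_sub_le hu hv hd ht) hρ

lemma continuous_emdenMap (h : EmdenSetting σ r₀ A γ B) {R : ℝ} (hR : r₀ ≤ R) {u : ℝ → ℝ}
    (hu_cont : Continuous u) (hu : ∀ x, u x ∈ Icc 0 2) :
    Continuous (emdenMap A B γ σ R u) := by
  have hmax : Continuous fun r : ℝ => max r R := continuous_id.max continuous_const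
  have hmem : ∀ r : ℝ, max r R ∈ Ici r₀ := fun r => hR.trans (le_max_right r R)
  have hop : ContinuousOn (emdenOp A B σ fun t => γ t * u t) (Ici r₀) :=
    (integrableOn_emdenFlux_div (h.integrableOn_source hu_cont hu)
      h.integrableOn_inv_A).continuousOn_Ici_primitive_Ioi
  exact continuous_const.sub ((hop.comp_continuous hmax hmem).div
    (h.continuousOn_gamma.comp_continuous hmax hmem) fun r => (h.gamma_pos (hmem r)).ne')

lemma abs_emdenMap_sub_le (h : EmdenSetting σ r₀ A γ B) {R : ℝ} (hR : r₀ ≤ R) {u v : ℝ → ℝ}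
    {d : ℝ} (hu_cont : Continuous u) (hv_cont : Continuous v) (hu : ∀ x, u x ∈ Icc 0 2)
    (hv : ∀ x, v x ∈ Icc 0 2) (hd : ∀ x, |u x - v x| ≤ d) (r : ℝ) :
    |emdenMap A B γ σ R u r - emdenMap A B γ σ R v r| ≤
      σ * 2 ^ (σ - 1) * d * ∫ t in Ioi (max r R), γ t ^ σ * |B t| := by
  have hρ : r₀ ≤ max r R := hR.trans (le_max_right r R)
  have hγ := h.gamma_pos hρ
  rw [emdenMap, emdenMap, show ∀ a b c : ℝ, 1 - a / c - (1 - b / c) = (b - a) / c from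
    fun a b c => by ring, abs_div, abs_of_pos hγ, div_le_iff₀ hγ, abs_sub_comm]
  exact h.abs_emdenOp_mul_sub_le hu_cont hv_cont hu hv hd hρ

lemma emdenMap_zero (h : EmdenSetting σ r₀ A γ B) (R : ℝ) :
    emdenMap A B γ σ R (fun _ => 0) = 1 := by
  have hσ0 : σ ≠ 0 := (zero_lt_one.trans_le h.one_le_sigma).ne'
  ext r
  simp [emdenMap, emdenOp, emdenFlux, zero_rpow hσ0]

lemma abs_emdenMap_sub_one_le (h : EmdenSetting σ r₀ A γ B) {R : ℝ} (hR : r₀ ≤ R) {u : ℝ → ℝ}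
    (hu_cont : Continuous u) (hu : ∀ x, u x ∈ Icc 0 2) (r : ℝ) :
    |emdenMap A B γ σ R u r - 1| ≤
      σ * 2 ^ (σ - 1) * 2 * ∫ t in Ioi (max r R), γ t ^ σ * |B t| := by
  simpa [h.emdenMap_zero R] using h.abs_emdenMap_sub_le hR hu_cont continuous_const hu
    (fun _ => ⟨le_rfl, zero_le_two⟩)
    (fun x => by simpa [abs_of_nonneg (hu x).1] using (hu x).2) r

lemma integral_weight_Ioi_le (h : EmdenSetting σ r₀ A γ B) {R ρ : ℝ} (hR : r₀ ≤ R) (hρ : R ≤ ρ) :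
    ∫ t in Ioi ρ, γ t ^ σ * |B t| ≤ ∫ t in Ioi R, γ t ^ σ * |B t| :=
  setIntegral_mono_set (h.integrableOn_weight.mono_set (Ioi_subset_Ioi hR))
    (ae_restrict_of_forall_mem measurableSet_Ioi fun _ ht =>
      mul_nonneg (rpow_nonneg (h.gamma_pos (hR.trans (le_of_lt ht))).le _) (abs_nonneg _))
    (Ioi_subset_Ioi hρ).eventuallyLE

lemma exists_fixedPoint_emdenMap (h : EmdenSetting σ r₀ A γ B) {R : ℝ} (hR : r₀ ≤ R)
    (hsmall : σ * 2 ^ (σ - 1) * ∫ t in Ioi R, γ t ^ σ * |B t| ≤ 1 / 4) :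
    ∃ u : ℝ → ℝ, Continuous u ∧ (∀ x, u x ∈ Icc (1 / 2) 2) ∧
      ∀ r, u r = emdenMap A B γ σ R u r := by
  set S := Metric.closedBall (1 : ℝ →ᵇ ℝ) (1 / 2)
  have hS : ∀ u ∈ S, ∀ x, (u : ℝ →ᵇ ℝ) x ∈ Icc (1 / 2) 2 := fun u hu x => by
    have := (BoundedContinuousFunction.dist_coe_le_dist x).trans (Metric.mem_closedBall.1 hu)
    rw [BoundedContinuousFunction.coe_one, Pi.one_apply, Real.dist_eq, abs_le] at this
    constructor <;> linarith
  have hS₀ : ∀ u ∈ S, ∀ x, (u : ℝ →ᵇ ℝ) x ∈ Icc 0 2 := fun u hu x =>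
    ⟨by linarith [(hS u hu x).1], (hS u hu x).2⟩
  have htail : ∀ r, σ * 2 ^ (σ - 1) * ∫ t in Ioi (max r R), γ t ^ σ * |B t| ≤ 1 / 4 :=
    fun r => (mul_le_mul_of_nonneg_left (h.integral_weight_Ioi_le hR (le_max_right r R))
      h.sigma_mul_two_rpow_nonneg).trans hsmall
  have hclose : ∀ u ∈ S, ∀ r, |emdenMap A B γ σ R u r - 1| ≤ 1 / 2 := fun u hu r => by
    have := h.abs_emdenMap_sub_one_le hR u.continuous (hS₀ u hu) r
    linarith [htail r]
  let T : S → S := fun u =>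
    ⟨.ofNormedAddCommGroup (emdenMap A B γ σ R u) (h.continuous_emdenMap hR u.1.continuous
      (hS₀ u u.2)) 2 fun r => by
        have := abs_le.1 (hclose u u.2 r)
        rw [Real.norm_eq_abs, abs_le]; constructor <;> linarith,
     (BoundedContinuousFunction.dist_le (by norm_num)).2 fun r => hclose u u.2 r⟩
  have hT : ContractingWith (1 / 4) T := by
    refine ⟨by rw [← NNReal.coe_lt_coe]; norm_num, LipschitzWith.of_dist_le_mul fun u v => ?_⟩
    refine (BoundedContinuousFunction.dist_le (by positivity)).2 fun r => ?_
    have := h.abs_emdenMap_sub_le hR u.1.continuous v.1.continuous (hS₀ u u.2) (hS₀ v v.2)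
      (fun x => BoundedContinuousFunction.dist_coe_le_dist (f := u.1) (g := v.1) x) r
    rw [NNReal.coe_div, NNReal.coe_one, NNReal.coe_ofNat]
    calc _ ≤ _ := this
      _ = (σ * 2 ^ (σ - 1) * ∫ t in Ioi (max r R), γ t ^ σ * |B t|) * dist u v := by
          rw [Subtype.dist_eq]; ring
      _ ≤ 1 / 4 * dist u v := mul_le_mul_of_nonneg_right (htail r) dist_nonneg
  have : CompleteSpace S := Metric.isClosed_closedBall.completeSpace_coe
  have : Nonempty S := ⟨⟨1, Metric.mem_closedBall_self (by norm_num)⟩⟩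
  obtain ⟨u, hfix⟩ : ∃ u, T u = u := ⟨_, hT.fixedPoint_isFixedPt⟩
  exact ⟨u.1, u.1.continuous, hS u.1 u.2, fun r => congrArg (fun w : S => w.1 r) hfix.symm⟩

lemma mul_eq_sub_emdenOp (h : EmdenSetting σ r₀ A γ B) {R : ℝ} (hR : r₀ ≤ R) {u : ℝ → ℝ}
    (hfix : ∀ r, u r = emdenMap A B γ σ R u r) {r : ℝ} (hr : R ≤ r) :
    γ r * u r = γ r - emdenOp A B σ (fun t => γ t * u t) r := by
  have hγ := (h.gamma_pos (hR.trans hr)).ne'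
  rw [hfix r, emdenMap, max_eq_left hr]
  field_simp

lemma tendsto_mul_div_gamma (h : EmdenSetting σ r₀ A γ B) {R : ℝ} (hR : r₀ ≤ R) {u : ℝ → ℝ}
    (hu_cont : Continuous u) (hu : ∀ x, u x ∈ Icc 0 2)
    (hfix : ∀ r, u r = emdenMap A B γ σ R u r) :
    Tendsto (fun r => γ r * u r / γ r) atTop (𝓝 1) := by
  have htail : Tendsto (fun r => σ * 2 ^ (σ - 1) * 2 * ∫ t in Ioi (max r R), γ t ^ σ * |B t|)
      atTop (𝓝 0) := by
    simpa using (tendsto_integral_Ioi_zero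
      (tendsto_atTop_mono (fun r => le_max_left r R) tendsto_id)).const_mul
      (σ * 2 ^ (σ - 1) * 2)
  have hu_lim : Tendsto u atTop (𝓝 1) := by
    rw [tendsto_iff_norm_sub_tendsto_zero]
    refine squeeze_zero (fun _ => norm_nonneg _) (fun r => ?_) htail
    rw [hfix r, Real.norm_eq_abs]
    exact h.abs_emdenMap_sub_one_le hR hu_cont hu r
  refine hu_lim.congr' ?_
  filter_upwards [eventually_ge_atTop r₀] with r hr
  rw [mul_div_cancel_left₀ _ (h.gamma_pos hr).ne']

end EmdenSetting

theorem ode_positive_solution_general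
    (σ r₀ : ℝ) (hσ : 1 < σ)
    (A : ℝ → ℝ) (hA_diff : ContDiffOn ℝ 1 A (Set.Ioi r₀))
    (hA_pos : ∀ r ∈ Set.Ioi r₀, 0 < A r)
    (hA_int : IntegrableOn (fun r => 1 / A r) (Set.Ioi r₀))
    (γ : ℝ → ℝ) (hγ : ∀ r, r₀ ≤ r → γ r = ∫ ξ in Set.Ioi r, 1 / A ξ)
    (B : ℝ → ℝ) (hB_cont : ContinuousOn B (Set.Ioi r₀))
    (hB_int : IntegrableOn (fun r => γ r ^ σ * |B r|) (Set.Ioi r₀)) :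
    ∃ R₀ : ℝ, r₀ < R₀ ∧ ∃ y y' Ay'' : ℝ → ℝ,
      (∀ r ∈ Set.Ioi R₀, 0 < y r) ∧
      (∀ r ∈ Set.Ioi R₀, HasDerivAt y (y' r) r) ∧
      (∀ r ∈ Set.Ioi R₀, HasDerivAt (fun s => A s * y' s) (Ay'' r) r) ∧
      (∀ r ∈ Set.Ioi R₀, Ay'' r + B r * y r ^ σ = 0) ∧
      Filter.Tendsto (fun r => y r / γ r) Filter.atTop (nhds 1) := by
  have h : EmdenSetting σ r₀ A γ B := ⟨hσ.le, hA_pos, hA_int, hγ, hB_cont, hB_int⟩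
  have htail : Tendsto (fun R => σ * 2 ^ (σ - 1) * ∫ t in Ioi R, γ t ^ σ * |B t|) atTop (𝓝 0) :=
    by simpa using (tendsto_integral_Ioi_zero tendsto_id).const_mul (σ * 2 ^ (σ - 1))
  obtain ⟨R₀, hR₀, hsmall⟩ := ((eventually_gt_atTop r₀).and
    (htail.eventually_le_const (by norm_num : (0 : ℝ) < 1 / 4))).exists
  obtain ⟨u, hu_cont, hu, hfix⟩ := h.exists_fixedPoint_emdenMap hR₀.le hsmall
  have hu₀ : ∀ x, u x ∈ Icc 0 2 := fun x => ⟨by linarith [(hu x).1], (hu x).2⟩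
  set y : ℝ → ℝ := fun r => γ r * u r
  have hP := h.integrableOn_source hu_cont hu₀
  refine ⟨R₀, hR₀, y, fun r => (emdenFlux B σ y r - 1) / A r, fun r => -(B r * y r ^ σ),
    fun r hr => ?_, fun r hr => ?_, fun r hr => ?_, fun r _ => neg_add_cancel _,
    h.tendsto_mul_div_gamma hR₀.le hu_cont hu₀ hfix⟩
  · exact mul_pos (h.gamma_pos (hR₀.trans hr).le) (by linarith [(hu r).1])
  · have hr₀ : r₀ < r := hR₀.trans hr
    have hA : ContinuousAt A r := hA_diff.continuousOn.continuousAt (Ioi_mem_nhds hr₀)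
    refine hasDerivAt_of_eq_sub_emdenOp hr₀ hA (hA_pos r hr₀).ne' (h.hasDerivAt_gamma hr₀ hA)
      hP hA_int ?_
    filter_upwards [Ioi_mem_nhds hr] with s hs
    exact h.mul_eq_sub_emdenOp hR₀.le hfix (le_of_lt hs)
  · have hr₀ : r₀ < r := hR₀.trans hr
    refine hasDerivAt_mul_emdenFlux_sub_one_div hr₀ ?_ hP
      ((h.continuousOn_source hu_cont).continuousAt (Ioi_mem_nhds hr₀))
    filter_upwards [Ioi_mem_nhds hr₀] with s hs
    exact (hA_pos s hs).ne'

/-- Proposition 5.1: existence of a positive solution `y` of `(A y')' + B y^σ = 0` on a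
neighbourhood of infinity, asymptotic to `γ(r) = ∫_r^∞ dξ/A(ξ)`. -/
theorem ode_positive_solution
    (σ r₀ : ℝ) (hσ : 1 < σ) (hr₀ : 0 < r₀)
    (A : ℝ → ℝ) (hA_diff : ContDiffOn ℝ 1 A (Set.Ioi r₀))
    (hA_pos : ∀ r ∈ Set.Ioi r₀, 0 < A r)
    (hA_int : IntegrableOn (fun r => 1 / A r) (Set.Ioi r₀))
    (γ : ℝ → ℝ) (hγ : ∀ r, r₀ ≤ r → γ r = ∫ ξ in Set.Ioi r, 1 / A ξ)
    (B : ℝ → ℝ) (hB_cont : ContinuousOn B (Set.Ioi r₀))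
    (hB_int : IntegrableOn (fun r => γ r ^ σ * |B r|) (Set.Ioi r₀)) :
    ∃ R₀ : ℝ, r₀ < R₀ ∧ ∃ y y' Ay'' : ℝ → ℝ,
      (∀ r ∈ Set.Ioi R₀, 0 < y r) ∧
      (∀ r ∈ Set.Ioi R₀, HasDerivAt y (y' r) r) ∧
      (∀ r ∈ Set.Ioi R₀, HasDerivAt (fun s => A s * y' s) (Ay'' r) r) ∧
      (∀ r ∈ Set.Ioi R₀, Ay'' r + B r * y r ^ σ = 0) ∧
      Filter.Tendsto (fun r => y r / γ r) Filter.atTop (nhds 1) :=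
  ode_positive_solution_general σ r₀ hσ A hA_diff hA_pos hA_int γ hγ B hB_cont hB_int
end

section
/- Let (X, d) be a metric space with a Borel measure μ, fix a basepoint o ∈ X, write r(x) = d(x, o) and B_R = {x ∈ X : r(x) < R}. Let W : X → [0, ∞) be measurable, and let A ∈ ℝ, k ≥ 0, λ ≥ 0, τ > 0, C > 0, R₁ > 1 be constants such that for every R ≥ R₁ one has ∫_{B_R \ B_{R/2}} W dμ ≤ C R^{A} (log R)^{k} e^{−λ (log R)^{τ}}. Then there exist constants C' > 0 and R₂ > 1 such that for every R ≥ R₂ and every nonincreasing function f : (0, ∞) → [0, ∞) one has ∫_{X \ B_R} f(r(x)) W(x) dμ(x) ≤ C' ∫_{R/2}^{∞} f(r) r^{A−1} (log r)^{k} e^{−λ (log r)^{τ}} dr. -/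
/-!
Cut `X \ B_R` into the dyadic annuli `B_{2S} \ B_S`, `S = 2^j R`. On such an annulus
`f(r(x)) ≤ f(S)`, so by the growth hypothesis its contribution is at most
`f(S) · C φ(2S)`, where `φ(R) = R^A (log R)^k e^{-λ (log R)^τ}` (`logGrowth A k λ τ R`). Since
`φ(2S) = 4 · (S/2) · ψ(2S)` with `ψ(r) = r^{A-1} (log r)^k e^{-λ (log r)^τ}`, and `ψ(2S)` is
comparable to `ψ(r)` for `r ∈ (S/2, S]` while `f(S) ≤ f(r)` there, this contribution is
bounded by a constant times the integral of `f ψ` over `(S/2, S]`. These intervals are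
disjoint and lie in `(R/2, ∞)`.
-/

open MeasureTheory Real ENNReal Metric Set

noncomputable def logGrowth (A k lam τ r : ℝ) : ℝ :=
  r ^ A * log r ^ k * exp (-lam * log r ^ τ)

lemma rpow_le_rpow_abs_mul_rpow {x y b : ℝ} (p : ℝ) (hy : 0 < y) (hyx : y ≤ x)
    (hxb : x ≤ b * y) : x ^ p ≤ b ^ |p| * y ^ p := by
  have hq₁ : 1 ≤ x / y := (one_le_div hy).2 hyx
  have hqb : x / y ≤ b := (div_le_iff₀ hy).2 hxb
  calc x ^ p = (x / y) ^ p * y ^ p := by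
        rw [← mul_rpow (by positivity) hy.le, div_mul_cancel₀ _ hy.ne']
    _ ≤ b ^ |p| * y ^ p := by
        gcongr
        calc (x / y) ^ p ≤ (x / y) ^ |p| := rpow_le_rpow_of_exponent_le hq₁ (le_abs_self p)
          _ ≤ b ^ |p| := rpow_le_rpow (by positivity) hqb (abs_nonneg p)

lemma logGrowth_nonneg (A k lam τ : ℝ) {r : ℝ} (hr : 1 ≤ r) : 0 ≤ logGrowth A k lam τ r := by
  have : 0 ≤ log r := log_nonneg hr
  unfold logGrowth
  positivity

lemma logGrowth_eq_mul_logGrowth_sub_one (A k lam τ : ℝ) {r : ℝ} (hr : 0 < r) :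
    logGrowth A k lam τ r = r * logGrowth (A - 1) k lam τ r := by
  rw [logGrowth, logGrowth, rpow_sub_one hr.ne']
  field_simp

/-- `b ≤ r` gives `log x ≤ 2 log r`, whence the factor `2 ^ |k|`. -/
lemma logGrowth_le_mul_logGrowth {p k lam τ r x b : ℝ} (hlam : 0 ≤ lam) (hτ : 0 ≤ τ)
    (hr : 1 < r) (hrx : r ≤ x) (hxb : x ≤ b * r) (hbr : b ≤ r) :
    logGrowth p k lam τ x ≤ b ^ |p| * 2 ^ |k| * logGrowth p k lam τ r := by
  have hr₀ : 0 < r := by linarith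
  have hb₁ : 1 ≤ b := by nlinarith
  have hlogr : 0 < log r := log_pos hr
  have hlogx : log r ≤ log x := log_le_log hr₀ hrx
  have hlogx₂ : log x ≤ 2 * log r := by
    calc log x ≤ log (b * r) := log_le_log (by linarith) hxb
      _ = log b + log r := log_mul (by linarith) hr₀.ne'
      _ ≤ 2 * log r := by linarith [log_le_log (by linarith) hbr]
  have hpow := rpow_le_rpow_abs_mul_rpow p hr₀ hrx hxb
  have hlog := rpow_le_rpow_abs_mul_rpow k hlogr hlogx hlogx₂
  have hexp : exp (-lam * log x ^ τ) ≤ exp (-lam * log r ^ τ) := by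
    have := mul_le_mul_of_nonneg_left (rpow_le_rpow hlogr.le hlogx hτ) hlam
    exact exp_le_exp.2 (by linarith)
  calc logGrowth p k lam τ x
      ≤ (b ^ |p| * r ^ p) * (2 ^ |k| * log r ^ k) * exp (-lam * log r ^ τ) := by
        unfold logGrowth
        have : 0 ≤ log x := by linarith
        gcongr
    _ = b ^ |p| * 2 ^ |k| * logGrowth p k lam τ r := by
        unfold logGrowth
        ring

lemma ofReal_mul_sub_le_setLIntegral_Ioc {a b c : ℝ} {F : ℝ → ℝ} (hc : 0 ≤ c)
    (hF : ∀ r ∈ Ioc a b, c ≤ F r) :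
    ENNReal.ofReal (c * (b - a)) ≤ ∫⁻ r in Ioc a b, ENNReal.ofReal (F r) := by
  calc ENNReal.ofReal (c * (b - a)) = ∫⁻ _ in Ioc a b, ENNReal.ofReal c := by
        rw [setLIntegral_const, Real.volume_Ioc, ENNReal.ofReal_mul hc]
    _ ≤ ∫⁻ r in Ioc a b, ENNReal.ofReal (F r) :=
        setLIntegral_mono' measurableSet_Ioc fun r hr => ENNReal.ofReal_le_ofReal (hF r hr)

lemma compl_ball_subset_iUnion_annuli {X : Type*} [PseudoMetricSpace X] (o : X) {R : ℝ}
    (hR : 0 < R) : (ball o R)ᶜ ⊆ ⋃ j : ℕ, ball o (2 * (2 ^ j * R)) \ ball o (2 ^ j * R) := by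
  intro x hx
  have hRx : R ≤ dist x o := by simpa [mem_ball] using hx
  obtain ⟨j, hj, hj'⟩ :=
    exists_nat_pow_near ((one_le_div hR).2 hRx) (by norm_num : (1 : ℝ) < 2)
  rw [le_div_iff₀ hR] at hj
  rw [div_lt_iff₀ hR, pow_succ] at hj'
  exact mem_iUnion.2 ⟨j, mem_ball.2 (by linarith), by simpa [mem_ball] using hj⟩

lemma tsum_setLIntegral_dyadic_Ioc_le {R : ℝ} (hR : 0 ≤ R) (F : ℝ → ℝ≥0∞) :
    ∑' j : ℕ, ∫⁻ r in Ioc (2 ^ j * R / 2) (2 ^ j * R), F r ≤ ∫⁻ r in Ioi (R / 2), F r := by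
  have hdisj :
      Pairwise (Function.onFun Disjoint fun j : ℕ => Ioc (2 ^ j * R / 2) (2 ^ j * R)) := by
    have hmono : Monotone fun j : ℕ => 2 ^ j * R / 2 := fun i j hij => by
      have := pow_le_pow_right₀ (by norm_num : (1 : ℝ) ≤ 2) hij
      dsimp only
      gcongr
    convert hmono.pairwise_disjoint_on_Ioc_succ using 3 with j
    rw [Order.succ_eq_add_one, pow_succ]
    congr 1
    ring
  have hsub : (⋃ j : ℕ, Ioc (2 ^ j * R / 2) (2 ^ j * R)) ⊆ Ioi (R / 2) := by
    refine iUnion_subset fun j r hr => lt_of_le_of_lt ?_ hr.1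
    have := one_le_pow₀ (by norm_num : (1 : ℝ) ≤ 2) (n := j)
    nlinarith
  rw [← lintegral_iUnion (fun _ => measurableSet_Ioc) hdisj]
  exact lintegral_mono_set hsub

lemma setLIntegral_antitone_dist_mul_le {X : Type*} [PseudoMetricSpace X] [MeasurableSpace X]
    (μ : Measure X) (o : X) (W : X → ℝ) {f : ℝ → ℝ} (hf : ∀ r, 0 ≤ f r)
    (hfa : AntitoneOn f (Ioi 0)) {s : Set X} (hs : MeasurableSet s) {S : ℝ} (hS : 0 < S)
    (hsS : s ⊆ (ball o S)ᶜ) :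
    ∫⁻ x in s, ENNReal.ofReal (f (dist x o) * W x) ∂μ ≤
      ENNReal.ofReal (f S) * ∫⁻ x in s, ENNReal.ofReal (W x) ∂μ := by
  rw [← lintegral_const_mul' _ _ ENNReal.ofReal_ne_top]
  refine setLIntegral_mono' hs fun x hx => ?_
  have hSx : S ≤ dist x o := by simpa [mem_ball] using hsS hx
  rw [ENNReal.ofReal_mul (hf _)]
  gcongr
  exact hfa hS (hS.trans_le hSx) hSx

lemma ofReal_mul_logGrowth_le_setLIntegral_Ioc {A k lam τ C S : ℝ} (hlam : 0 ≤ lam)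
    (hτ : 0 ≤ τ) (hC : 0 ≤ C) (hS : 8 ≤ S) {f : ℝ → ℝ} (hf : ∀ r, 0 ≤ f r)
    (hfa : AntitoneOn f (Ioi 0)) :
    ENNReal.ofReal (f S) * ENNReal.ofReal (C * logGrowth A k lam τ (2 * S)) ≤
      ∫⁻ r in Ioc (S / 2) S,
        ENNReal.ofReal (4 * C * 4 ^ |A - 1| * 2 ^ |k| * f r * logGrowth (A - 1) k lam τ r) := by
  have hψ := logGrowth_nonneg (A - 1) k lam τ (by linarith : 1 ≤ 2 * S)
  have hfS := hf S
  rw [← ENNReal.ofReal_mul hfS]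
  calc ENNReal.ofReal (f S * (C * logGrowth A k lam τ (2 * S)))
      = ENNReal.ofReal (4 * C * f S * logGrowth (A - 1) k lam τ (2 * S) * (S - S / 2)) := by
        rw [logGrowth_eq_mul_logGrowth_sub_one _ _ _ _ (by linarith)]
        ring_nf
    _ ≤ _ := ofReal_mul_sub_le_setLIntegral_Ioc (by positivity) fun r ⟨hr₁, hr₂⟩ => ?_
  have hψr := logGrowth_le_mul_logGrowth (p := A - 1) (k := k) hlam hτ (by linarith : 1 < r)
    (by linarith : r ≤ 2 * S) (by linarith : 2 * S ≤ 4 * r) (by linarith : (4 : ℝ) ≤ r)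
  have hfr : f S ≤ f r :=
    hfa (by simp only [mem_Ioi]; linarith) (by simp only [mem_Ioi]; linarith) hr₂
  have hfr₀ := hf r
  calc 4 * C * f S * logGrowth (A - 1) k lam τ (2 * S)
      ≤ 4 * C * f r * (4 ^ |A - 1| * 2 ^ |k| * logGrowth (A - 1) k lam τ r) := by gcongr
    _ = 4 * C * 4 ^ |A - 1| * 2 ^ |k| * f r * logGrowth (A - 1) k lam τ r := by ring

lemma setLIntegral_annulus_le_setLIntegral_Ioc {X : Type*} [PseudoMetricSpace X]
    [MeasurableSpace X] [OpensMeasurableSpace X] (μ : Measure X) (o : X) (W : X → ℝ)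
    {A k lam τ C S : ℝ} (hlam : 0 ≤ lam) (hτ : 0 ≤ τ) (hC : 0 ≤ C) (hS : 8 ≤ S)
    (hvolS : ∫⁻ x in ball o (2 * S) \ ball o S, ENNReal.ofReal (W x) ∂μ ≤
      ENNReal.ofReal (C * logGrowth A k lam τ (2 * S)))
    {f : ℝ → ℝ} (hf : ∀ r, 0 ≤ f r) (hfa : AntitoneOn f (Ioi 0)) :
    ∫⁻ x in ball o (2 * S) \ ball o S, ENNReal.ofReal (f (dist x o) * W x) ∂μ ≤
      ∫⁻ r in Ioc (S / 2) S,
        ENNReal.ofReal (4 * C * 4 ^ |A - 1| * 2 ^ |k| * f r * logGrowth (A - 1) k lam τ r) :=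
  calc _ ≤ ENNReal.ofReal (f S) * ∫⁻ x in ball o (2 * S) \ ball o S, ENNReal.ofReal (W x) ∂μ :=
        setLIntegral_antitone_dist_mul_le μ o W hf hfa (measurableSet_ball.diff measurableSet_ball)
          (by linarith) (sdiff_subset_compl _ _)
    _ ≤ ENNReal.ofReal (f S) * ENNReal.ofReal (C * logGrowth A k lam τ (2 * S)) := by gcongr
    _ ≤ _ := ofReal_mul_logGrowth_le_setLIntegral_Ioc hlam hτ hC hS hf hfa

theorem annuli_integral_estimate_general
    {X : Type*} [MetricSpace X] [MeasurableSpace X] [BorelSpace X]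
    (μ : Measure X) (o : X)
    (W : X → ℝ)
    (A k lam τ C R₁ : ℝ) (hlam : 0 ≤ lam) (hτ : 0 < τ) (hC : 0 < C)
    (hvol : ∀ R, R₁ ≤ R →
      ∫⁻ x in Metric.ball o R \ Metric.ball o (R / 2), ENNReal.ofReal (W x) ∂μ ≤
        ENNReal.ofReal (C * R ^ A * Real.log R ^ k * Real.exp (-lam * Real.log R ^ τ))) :
    ∃ C' : ℝ, 0 < C' ∧ ∃ R₂ : ℝ, 1 < R₂ ∧
      ∀ R, R₂ ≤ R → ∀ f : ℝ → ℝ, (∀ r, 0 ≤ f r) → AntitoneOn f (Set.Ioi 0) →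
        ∫⁻ x in (Metric.ball o R)ᶜ, ENNReal.ofReal (f (dist x o) * W x) ∂μ ≤
          ∫⁻ r in Set.Ioi (R / 2),
            ENNReal.ofReal (C' * f r * r ^ (A - 1) * Real.log r ^ k *
              Real.exp (-lam * Real.log r ^ τ)) := by
  refine ⟨4 * C * 4 ^ |A - 1| * 2 ^ |k|, by positivity, max R₁ 8,
    lt_max_of_lt_right (by norm_num), fun R hR f hf hfa => ?_⟩
  have hR₀ : 0 < R := by linarith [le_of_max_le_right hR]
  have hdyadic : ∀ j : ℕ, R ≤ 2 ^ j * R :=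
    fun j => le_mul_of_one_le_left hR₀.le (one_le_pow₀ (by norm_num))
  have hvolS : ∀ S, R ≤ S → ∫⁻ x in ball o (2 * S) \ ball o S, ENNReal.ofReal (W x) ∂μ ≤
      ENNReal.ofReal (C * logGrowth A k lam τ (2 * S)) := fun S hS => by
    simpa [logGrowth, mul_assoc] using hvol (2 * S) (by linarith [le_of_max_le_left hR])
  calc _ ≤ ∑' j : ℕ, ∫⁻ x in ball o (2 * (2 ^ j * R)) \ ball o (2 ^ j * R),
          ENNReal.ofReal (f (dist x o) * W x) ∂μ :=
        (lintegral_mono_set (compl_ball_subset_iUnion_annuli o hR₀)).trans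
          (lintegral_iUnion_le _ _)
    _ ≤ ∑' j : ℕ, ∫⁻ r in Ioc (2 ^ j * R / 2) (2 ^ j * R),
          ENNReal.ofReal (4 * C * 4 ^ |A - 1| * 2 ^ |k| * f r * logGrowth (A - 1) k lam τ r) :=
        ENNReal.tsum_le_tsum fun j => setLIntegral_annulus_le_setLIntegral_Ioc μ o W hlam hτ.le
          hC.le (by linarith [hdyadic j, le_of_max_le_right hR]) (hvolS _ (hdyadic j)) hf hfa
    _ ≤ _ := tsum_setLIntegral_dyadic_Ioc_le hR₀.le _
    _ = _ := by simp only [logGrowth, mul_assoc]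

/-- The annulus-decomposition estimate (formula (2.19)): a weighted volume growth bound on
dyadic annuli implies an integral estimate on exteriors of balls against any nonincreasing
weight `f`. -/
theorem annuli_integral_estimate
    {X : Type*} [MetricSpace X] [MeasurableSpace X] [BorelSpace X]
    (μ : Measure X) (o : X)
    (W : X → ℝ) (hW_meas : Measurable W) (hW_nonneg : ∀ x, 0 ≤ W x)
    (A k lam τ C R₁ : ℝ) (hk : 0 ≤ k) (hlam : 0 ≤ lam) (hτ : 0 < τ) (hC : 0 < C)
    (hR₁ : 1 < R₁)
    (hvol : ∀ R, R₁ ≤ R →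
      ∫⁻ x in Metric.ball o R \ Metric.ball o (R / 2), ENNReal.ofReal (W x) ∂μ ≤
        ENNReal.ofReal (C * R ^ A * Real.log R ^ k * Real.exp (-lam * Real.log R ^ τ))) :
    ∃ C' : ℝ, 0 < C' ∧ ∃ R₂ : ℝ, 1 < R₂ ∧
      ∀ R, R₂ ≤ R → ∀ f : ℝ → ℝ, (∀ r, 0 ≤ f r) → AntitoneOn f (Set.Ioi 0) →
        ∫⁻ x in (Metric.ball o R)ᶜ, ENNReal.ofReal (f (dist x o) * W x) ∂μ ≤
          ∫⁻ r in Set.Ioi (R / 2),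
            ENNReal.ofReal (C' * f r * r ^ (A - 1) * Real.log r ^ k *
              Real.exp (-lam * Real.log r ^ τ)) :=
  annuli_integral_estimate_general μ o W A k lam τ C R₁ hlam hτ hC hvol
end
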